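/- arXiv:2205.00064 — 2 statements merged into one kernel-verified Lean document; each statement's English description precedes it below -/
import Mathlib

section
/- Let f : ℝ^d → ℝ be locally Lipschitz and assume hypotheses (H1), (H2), (H3) of the setting, with C_M > 0. Define D₁ := μ/(8(μ+L)), D₂ := μ/2, δ_GI := min{δ_A/4, D₁/C_M}. Then for every x ∈ ball(x̄, δ_GI) and every σ with 0 < σ ≤ D₁·dist(x, M), every g ∈ ∂_σ f(x) satisfies ‖g‖ ≥ D₂. -/
open Metric Set Filter
open scoped InnerProductSpace

abbrev Euc (d : ℕ) := EuclideanSpace ℝ (Fin d)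

noncomputable def clarkeSubdiff {d : ℕ} (f : Euc d → ℝ) (x : Euc d) : Set (Euc d) :=
  convexHull ℝ {v | ∃ u : ℕ → Euc d,
    (∀ n, DifferentiableAt ℝ f (u n)) ∧
    Tendsto u atTop (nhds x) ∧
    Tendsto (fun n => gradient f (u n)) atTop (nhds v)}

noncomputable def goldsteinSubdiff {d : ℕ} (f : Euc d → ℝ) (σ : ℝ) (x : Euc d) : Set (Euc d) :=
  convexHull ℝ (⋃ y ∈ closedBall x σ, clarkeSubdiff f y)

/-!
Let `r = dist(x, M) > 0`. For `y` within `σ ≤ D₁ r` of `x` and `v ∈ ∂f(y)`, the aiming condition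
at `y` gives `⟪v, y - P y⟫ ≥ μ dist(y, M) ≥ μ (r - ‖x - y‖)`, while `x - P x` differs from
`y - P y` by at most `2‖x - y‖ + C_M (r² + ‖x - y‖²)`, because `P` is to first order the
contraction `Q_x`. With `‖v‖ ≤ L` and the choice of `D₁` and `δ_GI` this loses at most `μ r / 2`,
so every Clarke subgradient near `x` lies in the half-space `⟪·, x - P x⟫ ≥ μ r / 2`. That
half-space is convex, hence contains `∂_σ f(x)`, and Cauchy–Schwarz with `‖x - P x‖ = r` gives
`‖g‖ ≥ μ / 2`.
-/

theorem half_mul_infDist_le_inner {E : Type*} [NormedAddCommGroup E] [InnerProductSpace ℝ E]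
    {M : Set E} {x y v p p' q : E} {L μ CM : ℝ} (hμ : 0 < μ) (hCM : 0 ≤ CM)
    (hv : ‖v‖ ≤ L) (haim : μ * infDist y M ≤ ⟪v, y - p'⟫_ℝ)
    (hq : ‖q‖ ≤ ‖y - x‖) (hreg : ‖p' - p - q‖ ≤ CM * (infDist x M ^ 2 + ‖x - y‖ ^ 2))
    (hxy : ‖x - y‖ ≤ μ / (8 * (μ + L)) * infDist x M)
    (hCMr : CM * infDist x M ≤ μ / (8 * (μ + L))) :
    μ / 2 * infDist x M ≤ ⟪v, x - p⟫_ℝ := by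
  set r := infDist x M
  set t := ‖x - y‖
  set D := μ / (8 * (μ + L))
  have hL : 0 ≤ L := (norm_nonneg v).trans hv
  have hr : 0 ≤ r := infDist_nonneg
  have ht : 0 ≤ t := norm_nonneg _
  have hDμ : D * (8 * (μ + L)) = μ := div_mul_cancel₀ _ (by positivity)
  have htr : t ≤ r := by nlinarith
  have hsr : r ≤ infDist y M + t := by
    simpa only [dist_eq_norm] using infDist_le_infDist_add_dist (x := x) (y := y) (s := M)
  have hpp : ‖p' - p‖ ≤ t + 2 * D * r := calc
    ‖p' - p‖ ≤ ‖q‖ + ‖p' - p - q‖ := norm_le_norm_add_norm_sub' _ _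
    _ ≤ t + CM * (r ^ 2 + t ^ 2) := by
      rw [norm_sub_rev] at hq
      gcongr
    _ ≤ t + 2 * D * r := by
      nlinarith [mul_le_mul_of_nonneg_right hCMr hr, mul_le_mul_of_nonneg_right hCMr ht,
        mul_le_mul_of_nonneg_left htr (mul_nonneg hCM ht)]
  have hshift : ⟪v, y - p'⟫_ℝ ≤ ⟪v, x - p⟫_ℝ + L * (t + ‖p' - p‖) := calc
    ⟪v, y - p'⟫_ℝ = ⟪v, x - p⟫_ℝ + ⟪v, (y - x) + (p - p')⟫_ℝ := by
      rw [← inner_add_right]; congr 1; abel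
    _ ≤ ⟪v, x - p⟫_ℝ + ‖v‖ * (t + ‖p' - p‖) := by
      gcongr
      refine (real_inner_le_norm _ _).trans (mul_le_mul_of_nonneg_left ?_ (norm_nonneg _))
      refine (norm_add_le _ _).trans ?_
      rw [norm_sub_rev y, norm_sub_rev p]
    _ ≤ ⟪v, x - p⟫_ℝ + L * (t + ‖p' - p‖) := by gcongr
  nlinarith

theorem le_inner_of_mem_goldsteinSubdiff {d : ℕ} {f : Euc d → ℝ} {σ c : ℝ} {x w g : Euc d}
    (h : ∀ y ∈ closedBall x σ, ∀ v ∈ clarkeSubdiff f y, c ≤ ⟪v, w⟫_ℝ)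
    (hg : g ∈ goldsteinSubdiff f σ x) : c ≤ ⟪g, w⟫_ℝ := by
  refine convexHull_min ?_ (convex_halfSpace_ge ((innerₗ (Euc d)).flip w).isLinear c) hg
  simp only [iUnion_subset_iff]
  exact h

theorem stmt2_general {d : ℕ}
    (f : Euc d → ℝ)
    (xbar : Euc d) (M : Set (Euc d)) (hxbarM : xbar ∈ M)
    (δA L μ CM : ℝ)
    (hL : 0 < L) (hμ : 0 < μ) (hCM : 0 < CM)
    (P : Euc d → Euc d)
    (hP : ∀ z ∈ ball xbar (2*δA), P z ∈ M ∧ ‖z - P z‖ = Metric.infDist z M)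
    (Tsp : Euc d → Submodule ℝ (Euc d)) (Q : Euc d → Euc d → Euc d)
    (hQ : ∀ x ∈ ball xbar δA, ∀ v, Q x v = ((Tsp x).orthogonalProjectionOnto v : Euc d))
    (H1 : ∀ x' ∈ ball xbar (2*δA), ∀ v ∈ clarkeSubdiff f x', ‖v‖ ≤ L)
    (H2 : ∀ x' ∈ ball xbar δA, ∀ v ∈ clarkeSubdiff f x',
      μ * Metric.infDist x' M ≤ ⟪ v, x' - P x' ⟫_ℝ)
    (H3 : ∀ x ∈ ball xbar δA, ∀ x' ∈ ball xbar (2*δA),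
      ‖P x' - P x - Q x (x' - x)‖ ≤ CM * (Metric.infDist x M ^ 2 + ‖x - x'‖ ^ 2))
    (D₁ D₂ δGI : ℝ)
    (hD₁ : D₁ = μ / (8*(μ+L)))
    (hD₂ : D₂ = μ/2)
    (hδGI : δGI = min (δA/4) (D₁/CM))
    (x : Euc d) (hx : x ∈ ball xbar δGI) (σ : ℝ) (hσ0 : 0 < σ)
    (hσ : σ ≤ D₁ * Metric.infDist x M)
    (g : Euc d) (hg : g ∈ goldsteinSubdiff f σ x) :
    D₂ ≤ ‖g‖ := by
  have hD₁pos : 0 < D₁ := by rw [hD₁]; positivity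
  have hD₁le : D₁ ≤ 1 := by rw [hD₁, div_le_one (by positivity)]; linarith
  have hrδ : infDist x M < δGI := (infDist_le_dist_of_mem hxbarM).trans_lt (mem_ball.mp hx)
  have hr : 0 < infDist x M := pos_of_mul_pos_right (hσ0.trans_le hσ) hD₁pos.le
  have hCMr : CM * infDist x M ≤ D₁ := by
    have := hrδ.trans_le (hδGI ▸ min_le_right _ _)
    rw [lt_div_iff₀' hCM] at this
    exact this.le
  have hσr : σ ≤ infDist x M := hσ.trans (mul_le_of_le_one_left hr.le hD₁le)
  have hδA : δGI ≤ δA / 4 := hδGI ▸ min_le_left _ _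
  have hnear : ∀ y ∈ closedBall x σ, y ∈ ball xbar δA ∧ y ∈ ball xbar (2 * δA) := by
    intro y hy
    simp only [mem_ball]
    constructor <;> linarith [dist_triangle y x xbar, mem_closedBall.mp hy, mem_ball.mp hx,
      dist_nonneg (x := y) (y := xbar)]
  obtain ⟨hxA, hxA₂⟩ := hnear x (mem_closedBall_self hσ0.le)
  have key : ∀ y ∈ closedBall x σ, ∀ v ∈ clarkeSubdiff f y,
      μ / 2 * infDist x M ≤ ⟪v, x - P x⟫_ℝ := by
    intro y hy v hv
    obtain ⟨hyA, hyA₂⟩ := hnear y hy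
    have hxy : ‖x - y‖ ≤ D₁ * infDist x M := by
      rw [← dist_eq_norm, dist_comm]; exact (mem_closedBall.mp hy).trans hσ
    have hQxy : ‖Q x (y - x)‖ ≤ ‖y - x‖ := by
      rw [hQ x hxA]; exact (Tsp x).norm_orthogonalProjectionOnto_apply_le _
    rw [hD₁] at hxy hCMr
    exact half_mul_infDist_le_inner hμ hCM.le (H1 y hyA₂ v hv) (H2 y hyA v hv) hQxy
      (H3 x hxA y hyA₂) hxy hCMr
  have hPx : ‖x - P x‖ = infDist x M := (hP x hxA₂).2
  rw [hD₂]
  refine le_of_mul_le_mul_right ((le_inner_of_mem_goldsteinSubdiff key hg).trans ?_) hr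
  simpa only [hPx] using real_inner_le_norm g (x - P x)

theorem stmt2 {d : ℕ}
    (f : Euc d → ℝ) (hf : LocallyLipschitz f)
    (xbar : Euc d) (M : Set (Euc d)) (hxbarM : xbar ∈ M)
    (δA L μ CM : ℝ)
    (hδA : 0 < δA) (hL : 0 < L) (hμ : 0 < μ) (hCM : 0 < CM)
    (P : Euc d → Euc d)
    (hP : ∀ z ∈ ball xbar (2*δA), P z ∈ M ∧ ‖z - P z‖ = Metric.infDist z M)
    (Tsp : Euc d → Submodule ℝ (Euc d)) (Q : Euc d → Euc d → Euc d)
    (hQ : ∀ x ∈ ball xbar δA, ∀ v, Q x v = ((Tsp x).orthogonalProjectionOnto v : Euc d))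
    (H1 : ∀ x' ∈ ball xbar (2*δA), ∀ v ∈ clarkeSubdiff f x', ‖v‖ ≤ L)
    (H2 : ∀ x' ∈ ball xbar δA, ∀ v ∈ clarkeSubdiff f x',
      μ * Metric.infDist x' M ≤ ⟪ v, x' - P x' ⟫_ℝ)
    (H3 : ∀ x ∈ ball xbar δA, ∀ x' ∈ ball xbar (2*δA),
      ‖P x' - P x - Q x (x' - x)‖ ≤ CM * (Metric.infDist x M ^ 2 + ‖x - x'‖ ^ 2))
    (D₁ D₂ δGI : ℝ)
    (hD₁ : D₁ = μ / (8*(μ+L)))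
    (hD₂ : D₂ = μ/2)
    (hδGI : δGI = min (δA/4) (D₁/CM))
    (x : Euc d) (hx : x ∈ ball xbar δGI) (σ : ℝ) (hσ0 : 0 < σ)
    (hσ : σ ≤ D₁ * Metric.infDist x M)
    (g : Euc d) (hg : g ∈ goldsteinSubdiff f σ x) :
    D₂ ≤ ‖g‖ :=
  stmt2_general f xbar M hxbarM δA L μ CM hL hμ hCM P hP Tsp Q hQ H1 H2 H3 D₁ D₂ δGI hD₁ hD₂ hδGI x
    hx σ hσ0 hσ g hg
end

section
/- Let f : ℝ^d → ℝ be locally Lipschitz and assume hypotheses (H1)–(H5) of the setting. Define D₂ := μ/2, E₁ := 8(μ+L)/μ, δ_Grid := min{δ_A/2, 1/(C_M(E₁+1)), μ/(8(C_a+β))}. Then for every x ∈ ball(x̄, δ_Grid), every σ > 0 with E₁·dist(x, M) ≤ σ ≤ δ_Grid, every nonzero g ∈ ∂_σ f(x), and every ĝ ∈ ∂f(x − σ·g/‖g‖): ⟨ĝ, g⟩ ≤ −D₂·‖g‖ + 2D₂·‖Q_x g‖. -/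
open Metric Set Filter
open scoped InnerProductSpace

/-! Write `x' = x - t • g` with `t = σ / ‖g‖` and split the step `x - x'` along the projections:
`t • g = (x - P x) - r + t • Q g - (x' - P x')`, where `r = P x' - P x - Q (x' - x)` is the
remainder in (H3). Pairing with `ĝ ∈ ∂f(x')`, the aiming condition (H2) turns the last term into
`-μ ‖x' - P x'‖`, and the triangle inequality bounds `‖x' - P x'‖` below by `t ‖g‖` minus the
normal terms `‖x - P x‖`, `‖r‖` and the tangential term `t ‖Q g‖`. The choice of `E₁` and `δ_Grid`
makes the normal terms at most `μ σ / 4` in total, and (H4), (H5) give `‖Q ĝ‖ ≤ μ / 4`; what is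
left is `⟪ĝ, g⟫ ≤ -(μ / 2) ‖g‖ + μ ‖Q g‖`. -/

section ProjectionGeometry

variable {E : Type*} [NormedAddCommGroup E] [InnerProductSpace ℝ E]

lemma inner_starProjection_le_norm_mul_norm (K : Submodule ℝ E) [K.HasOrthogonalProjection]
    (u v : E) : ⟪u, K.starProjection v⟫_ℝ ≤ ‖K.starProjection u‖ * ‖K.starProjection v‖ := by
  have hv : K.starProjection (K.starProjection v) = K.starProjection v :=
    K.starProjection_eq_self_iff.mpr (K.starProjection_apply_mem v)
  calc ⟪u, K.starProjection v⟫_ℝ = ⟪K.starProjection u, K.starProjection v⟫_ℝ := by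
        rw [K.inner_starProjection_left_eq_right, hv]
    _ ≤ _ := real_inner_le_norm _ _

lemma norm_starProjection_le_of_mem {K : Submodule ℝ E} [K.HasOrthogonalProjection] {w : E}
    (hw : w ∈ K) (v : E) : ‖K.starProjection v‖ ≤ ‖K.starProjection (v - w)‖ + ‖w‖ := by
  rw [map_sub, K.starProjection_eq_self_iff.mpr hw]
  exact norm_le_norm_sub_add _ _

variable (Q : E →L[ℝ] E) {x x' p p' g : E} {t : ℝ}

lemma smul_eq_of_eq_sub_smul (hx' : x' = x - t • g) :
    t • g = (x - p) - (p' - p - Q (x' - x)) + t • Q g - (x' - p') := by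
  subst hx'
  simp only [sub_sub_cancel_left, map_neg, map_smul]
  abel

lemma mul_norm_le_of_eq_sub_smul (ht : 0 ≤ t) (hx' : x' = x - t • g) :
    t * ‖g‖ ≤ ‖x - p‖ + ‖p' - p - Q (x' - x)‖ + t * ‖Q g‖ + ‖x' - p'‖ := by
  calc t * ‖g‖ = ‖t • g‖ := by rw [norm_smul, Real.norm_of_nonneg ht]
    _ = ‖(x - p) - (p' - p - Q (x' - x)) + t • Q g - (x' - p')‖ := by
        rw [← smul_eq_of_eq_sub_smul Q hx']
    _ ≤ ‖x - p‖ + ‖p' - p - Q (x' - x)‖ + ‖t • Q g‖ + ‖x' - p'‖ := by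
        grw [norm_sub_le, norm_add_le, norm_sub_le]
    _ = _ := by rw [norm_smul, Real.norm_of_nonneg ht]

lemma mul_inner_le_of_aiming (K : Submodule ℝ E) [K.HasOrthogonalProjection] {v : E} {L μ : ℝ}
    (ht : 0 ≤ t) (hμ : 0 ≤ μ) (hx' : x' = x - t • g) (hv : ‖v‖ ≤ L)
    (haim : μ * ‖x' - p'‖ ≤ ⟪v, x' - p'⟫_ℝ) :
    t * ⟪v, g⟫_ℝ ≤ (L + μ) * (‖x - p‖ + ‖p' - p - K.starProjection (x' - x)‖)
      + t * ((‖K.starProjection v‖ + μ) * ‖K.starProjection g‖) - μ * (t * ‖g‖) := by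
  set r := p' - p - K.starProjection (x' - x)
  have hdist := mul_norm_le_of_eq_sub_smul K.starProjection (p := p) (p' := p') ht hx'
  have hxp : ⟪v, x - p⟫_ℝ ≤ L * ‖x - p‖ :=
    (real_inner_le_norm _ _).trans (by gcongr)
  have hr : -⟪v, r⟫_ℝ ≤ L * ‖r‖ := by
    rw [← inner_neg_right]
    exact (real_inner_le_norm _ _).trans (by rw [norm_neg]; gcongr)
  have htan := mul_le_mul_of_nonneg_left (inner_starProjection_le_norm_mul_norm K v g) ht
  have hexpand : t * ⟪v, g⟫_ℝ = ⟪v, x - p⟫_ℝ - ⟪v, r⟫_ℝ + t * ⟪v, K.starProjection g⟫_ℝ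
      - ⟪v, x' - p'⟫_ℝ := by
    rw [← real_inner_smul_right, smul_eq_of_eq_sub_smul K.starProjection (p := p) (p' := p') hx']
    simp only [inner_sub_right, inner_add_right, real_inner_smul_right, r]
  linarith [mul_le_mul_of_nonneg_left hdist hμ]

lemma inner_le_of_aiming (K : Submodule ℝ E) [K.HasOrthogonalProjection] {v : E} {σ L μ : ℝ}
    (hg : g ≠ 0) (hσ : 0 < σ) (hμ : 0 ≤ μ) (hx' : x' = x - (σ / ‖g‖) • g) (hv : ‖v‖ ≤ L)
    (haim : μ * ‖x' - p'‖ ≤ ⟪v, x' - p'⟫_ℝ)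
    (hnormal : 4 * ((L + μ) * (‖x - p‖ + ‖p' - p - K.starProjection (x' - x)‖)) ≤ μ * σ)
    (htangential : 4 * ‖K.starProjection v‖ ≤ μ) :
    ⟪v, g⟫_ℝ ≤ -(μ / 2 * ‖g‖) + 2 * (μ / 2) * ‖K.starProjection g‖ := by
  have hg0 : 0 < ‖g‖ := norm_pos_iff.mpr hg
  have ht : 0 < σ / ‖g‖ := by positivity
  have hσt : μ * (σ / ‖g‖ * ‖g‖) = μ * σ := by rw [div_mul_cancel₀ _ hg0.ne']
  have key := mul_inner_le_of_aiming K (p := p) ht.le hμ hx' hv haim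
  have hKg : σ / ‖g‖ * (‖K.starProjection v‖ * ‖K.starProjection g‖)
      ≤ σ / ‖g‖ * (μ / 4 * ‖g‖) := by
    gcongr
    · linarith
    · exact K.norm_starProjection_apply_le g
  refine le_of_mul_le_mul_left ?_ ht
  linarith

end ProjectionGeometry

lemma clarkeSubdiff_subset_goldsteinSubdiff {d : ℕ} (f : Euc d → ℝ) {x y : Euc d} {σ : ℝ}
    (hy : y ∈ closedBall x σ) : clarkeSubdiff f y ⊆ goldsteinSubdiff f σ x :=
  fun _ hv ↦ subset_convexHull ℝ _ (mem_biUnion hy hv)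

lemma mul_mul_sq_add_sq_le {C D E σ : ℝ} (hC : 0 ≤ C) (hD : 0 ≤ D) (hE : 1 ≤ E) (hDσ : E * D ≤ σ)
    (hσ : C * (E + 1) * σ ≤ 1) : E * (C * (D ^ 2 + σ ^ 2)) ≤ σ := by
  have hσ0 : 0 ≤ σ := (mul_nonneg (by linarith) hD).trans hDσ
  have hDσ' : D ≤ σ := by nlinarith
  have hsq : E * (D ^ 2 + σ ^ 2) ≤ (E + 1) * σ ^ 2 := by
    nlinarith [mul_le_mul_of_nonneg_left hDσ hD, mul_le_mul_of_nonneg_left hDσ' hσ0]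
  calc E * (C * (D ^ 2 + σ ^ 2)) ≤ C * ((E + 1) * σ ^ 2) := by nlinarith
    _ = (C * (E + 1) * σ) * σ := by ring
    _ ≤ σ := by nlinarith

theorem stmt9_general {d : ℕ}
    (f : Euc d → ℝ)
    (xbar : Euc d) (M : Set (Euc d))
    (δA L μ γ β Ca CM : ℝ)
    (hL : 0 < L) (hμ : 0 < μ) (hβ : 0 < β)
    (hCa : 0 < Ca) (hCM : 0 < CM)
    (P : Euc d → Euc d)
    (hP : ∀ z ∈ ball xbar (2*δA), P z ∈ M ∧ ‖z - P z‖ = Metric.infDist z M)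
    (Tsp : Euc d → Submodule ℝ (Euc d)) (Q : Euc d → Euc d → Euc d)
    (hQ : ∀ x ∈ ball xbar δA, ∀ v, Q x v = (Submodule.orthogonalProjectionOnto (Tsp x) v : Euc d))
    (G : Euc d → Euc d)
    (hG : ∀ x ∈ ball xbar δA, G x ∈ Tsp x)
    (H1 : ∀ x' ∈ ball xbar (2*δA), ∀ v ∈ clarkeSubdiff f x', ‖v‖ ≤ L)
    (H2 : ∀ x' ∈ ball xbar δA, ∀ v ∈ clarkeSubdiff f x',
      μ * Metric.infDist x' M ≤ ⟪ v, x' - P x' ⟫_ℝ)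
    (H3 : ∀ x ∈ ball xbar δA, ∀ x' ∈ ball xbar (2*δA),
      ‖P x' - P x - Q x (x' - x)‖ ≤ CM * (Metric.infDist x M ^ 2 + ‖x - x'‖ ^ 2))
    (H4 : ∀ x ∈ ball xbar δA, ∀ σ ∈ Icc (0:ℝ) δA, ∀ g ∈ goldsteinSubdiff f σ x,
      ‖Q x (g - G x)‖ ≤ Ca * (Metric.infDist x M + σ))
    (H5 : ∀ x ∈ ball xbar δA, γ/2 * ‖P x - xbar‖ ≤ ‖G x‖ ∧ ‖G x‖ ≤ β * ‖P x - xbar‖)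
    (D₂ E₁ δGrid : ℝ)
    (hD₂ : D₂ = μ/2)
    (hE₁ : E₁ = 8*(μ+L)/μ)
    (hδGrid : δGrid = min (δA/2) (min (1/(CM*(E₁+1))) (μ/(8*(Ca+β)))))
    (x : Euc d) (hx : x ∈ ball xbar δGrid) (σ : ℝ) (hσ0 : 0 < σ)
    (hσ1 : E₁ * Metric.infDist x M ≤ σ) (hσ2 : σ ≤ δGrid)
    (g : Euc d) (hgne : g ≠ 0)
    (ghat : Euc d) (hghat : ghat ∈ clarkeSubdiff f (x - (σ/‖g‖) • g)) :
    ⟪ ghat, g ⟫_ℝ ≤ -(D₂ * ‖g‖) + 2*D₂*‖Q x g‖ := by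
  subst hD₂
  obtain ⟨hδA, hδCM, hδCa⟩ : δGrid ≤ δA / 2 ∧ δGrid ≤ 1 / (CM * (E₁ + 1)) ∧
      δGrid ≤ μ / (8 * (Ca + β)) := by
    simpa only [le_min_iff] using hδGrid.le
  have hμE₁ : μ * E₁ = 8 * (μ + L) := by rw [hE₁]; field_simp
  have hE₁ : 1 ≤ E₁ := by nlinarith
  rw [le_div_iff₀' (by positivity)] at hδCM
  rw [le_div_iff₀' (by positivity)] at hδCa
  set D := infDist x M
  have hD : 0 ≤ D := infDist_nonneg
  have hxδ : dist x xbar < δGrid := hx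
  set x' := x - (σ / ‖g‖) • g
  have hxx' : ‖x - x'‖ = σ := by
    have hg0 : 0 < ‖g‖ := norm_pos_iff.mpr hgne
    rw [sub_sub_cancel, norm_smul, Real.norm_of_nonneg (by positivity), div_mul_cancel₀ _ hg0.ne']
  have hx'x : dist x' x = σ := by rw [dist_eq_norm', hxx']
  have hxA : x ∈ ball xbar δA := mem_ball.mpr (by linarith [dist_nonneg (x := x) (y := xbar)])
  have hx'A : x' ∈ ball xbar δA := mem_ball.mpr (by linarith [dist_triangle x' x xbar])
  have h2A : ball xbar δA ⊆ ball xbar (2 * δA) :=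
    ball_subset_ball (by linarith [dist_nonneg (x := x) (y := xbar)])
  have hPx := (hP x (h2A hxA)).2
  have hPx' := (hP x' (h2A hx'A)).2
  have hQx : Q x = (Tsp x).starProjection := funext (hQ x hxA)
  have hR : E₁ * ‖P x' - P x - (Tsp x).starProjection (x' - x)‖ ≤ σ := by
    have h3 := H3 x hxA x' (h2A hx'A)
    rw [hQx, hxx'] at h3
    exact (mul_le_mul_of_nonneg_left h3 (by linarith)).trans
      (mul_mul_sq_add_sq_le hCM.le hD hE₁ hσ1 (by nlinarith))
  have htan : ‖(Tsp x).starProjection ghat‖ ≤ μ / 4 := by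
    have hghatσ : ghat ∈ goldsteinSubdiff f σ x :=
      clarkeSubdiff_subset_goldsteinSubdiff f (mem_closedBall.mpr hx'x.le) hghat
    have h4 := H4 x hxA σ ⟨hσ0.le, by linarith⟩ ghat hghatσ
    rw [hQx] at h4
    have hPx_xbar : ‖P x - xbar‖ ≤ D + δGrid := by
      rw [← dist_eq_norm]
      linarith [dist_triangle (P x) x xbar, dist_eq_norm x (P x), dist_comm x (P x)]
    have h5 : ‖G x‖ ≤ β * (D + δGrid) := (H5 x hxA).2.trans (by gcongr)
    calc ‖(Tsp x).starProjection ghat‖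
        ≤ ‖(Tsp x).starProjection (ghat - G x)‖ + ‖G x‖ :=
          norm_starProjection_le_of_mem (hG x hxA) ghat
      _ ≤ Ca * (D + σ) + β * (D + δGrid) := add_le_add h4 h5
      _ ≤ Ca * (2 * δGrid) + β * (2 * δGrid) := by gcongr <;> nlinarith
      _ ≤ μ / 4 := by linarith
  rw [hQx]
  refine inner_le_of_aiming (Tsp x) (p := P x) (p' := P x') hgne hσ0 hμ.le rfl
    (H1 x' (h2A hx'A) ghat hghat) (hPx' ▸ H2 x' hx'A ghat hghat) ?_ (by linarith)
  rw [hPx]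
  nlinarith [mul_le_mul_of_nonneg_left (add_le_add hσ1 hR) hμ.le]

theorem stmt9 {d : ℕ}
    (f : Euc d → ℝ) (hf : LocallyLipschitz f)
    (xbar : Euc d) (M : Set (Euc d)) (hxbarM : xbar ∈ M)
    (δA L μ γ β Ca CM : ℝ)
    (hδA : 0 < δA) (hL : 0 < L) (hμ : 0 < μ) (hγ : 0 < γ) (hβ : 0 < β)
    (hCa : 0 < Ca) (hCM : 0 < CM)
    (P : Euc d → Euc d)
    (hP : ∀ z ∈ ball xbar (2*δA), P z ∈ M ∧ ‖z - P z‖ = Metric.infDist z M)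
    (Tsp : Euc d → Submodule ℝ (Euc d)) (Q : Euc d → Euc d → Euc d)
    (hQ : ∀ x ∈ ball xbar δA, ∀ v, Q x v = (Submodule.orthogonalProjectionOnto (Tsp x) v : Euc d))
    (G : Euc d → Euc d)
    (hG : ∀ x ∈ ball xbar δA, G x ∈ Tsp x)
    (H1 : ∀ x' ∈ ball xbar (2*δA), ∀ v ∈ clarkeSubdiff f x', ‖v‖ ≤ L)
    (H2 : ∀ x' ∈ ball xbar δA, ∀ v ∈ clarkeSubdiff f x',
      μ * Metric.infDist x' M ≤ ⟪ v, x' - P x' ⟫_ℝ)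
    (H3 : ∀ x ∈ ball xbar δA, ∀ x' ∈ ball xbar (2*δA),
      ‖P x' - P x - Q x (x' - x)‖ ≤ CM * (Metric.infDist x M ^ 2 + ‖x - x'‖ ^ 2))
    (H4 : ∀ x ∈ ball xbar δA, ∀ σ ∈ Icc (0:ℝ) δA, ∀ g ∈ goldsteinSubdiff f σ x,
      ‖Q x (g - G x)‖ ≤ Ca * (Metric.infDist x M + σ))
    (H5 : ∀ x ∈ ball xbar δA, γ/2 * ‖P x - xbar‖ ≤ ‖G x‖ ∧ ‖G x‖ ≤ β * ‖P x - xbar‖)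
    (D₂ E₁ δGrid : ℝ)
    (hD₂ : D₂ = μ/2)
    (hE₁ : E₁ = 8*(μ+L)/μ)
    (hδGrid : δGrid = min (δA/2) (min (1/(CM*(E₁+1))) (μ/(8*(Ca+β)))))
    (x : Euc d) (hx : x ∈ ball xbar δGrid) (σ : ℝ) (hσ0 : 0 < σ)
    (hσ1 : E₁ * Metric.infDist x M ≤ σ) (hσ2 : σ ≤ δGrid)
    (g : Euc d) (hg : g ∈ goldsteinSubdiff f σ x) (hgne : g ≠ 0)
    (ghat : Euc d) (hghat : ghat ∈ clarkeSubdiff f (x - (σ/‖g‖) • g)) :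
    ⟪ ghat, g ⟫_ℝ ≤ -(D₂ * ‖g‖) + 2*D₂*‖Q x g‖ :=
  stmt9_general f xbar M δA L μ γ β Ca CM hL hμ hβ hCa hCM P hP Tsp Q hQ G hG H1 H2 H3 H4 H5 D₂ E₁
    δGrid hD₂ hE₁ hδGrid x hx σ hσ0 hσ1 hσ2 g hgne ghat hghat
end
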